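/- arXiv:2511.07937 — 5 statements merged into one kernel-verified Lean document; each statement's English description precedes it below -/
import Mathlib

section
/- Let Δ be a simplicial complex of dimension D − 1 and let a = f_{D−1}(Δ) be the number of its (D−1)-faces (a ≥ 1). Then f_{D−2}(Δ) ≥ aD − a(a−1)/2 if a ≤ D + 1, and f_{D−2}(Δ) ≥ D(D+1)/2 if a > D + 1. -/
open Polynomial

/-- An (abstract) simplicial complex on the finite vertex set `V`: a collection of
subsets of `V` containing all singletons and closed under taking subsets. -/
structure SimplicialCpx (V : Type*) [DecidableEq V] [Fintype V] where
  faces : Finset (Finset V)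
  singleton_mem : ∀ v : V, {v} ∈ faces
  down_closed : ∀ F ∈ faces, ∀ F' ⊆ F, F' ∈ faces

open Finset in
lemma card_shadow_singleton' {V : Type*} [DecidableEq V] (F : Finset V) :
    (Finset.shadow ({F} : Finset (Finset V))).card = F.card := by
  have h : Finset.shadow ({F} : Finset (Finset V)) = F.image F.erase := by
    ext s
    simp only [Finset.mem_shadow_iff, Finset.mem_singleton, Finset.mem_image]
    constructor
    · rintro ⟨t, rfl, a, ha, rfl⟩; exact ⟨a, ha, rfl⟩
    · rintro ⟨a, ha, rfl⟩; exact ⟨F, rfl, a, ha, rfl⟩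
  rw [h, Finset.card_image_of_injOn]
  intro a ha b hb hab
  by_contra hne
  have h2 : a ∈ F.erase b := Finset.mem_erase.2 ⟨hne, ha⟩
  rw [← hab] at h2
  exact (Finset.mem_erase.1 h2).1 rfl

open Finset in
lemma shadow_card_ge {V : Type*} [DecidableEq V] (D : ℕ) (S : Finset (Finset V))
    (hS : ∀ F ∈ S, F.card = D) :
    2 * (S.card : ℤ) * D - S.card * ((S.card : ℤ) - 1) ≤ 2 * ((Finset.shadow S).card : ℤ) := by
  classical
  induction S using Finset.induction_on with
  | empty => simp
  | @insert F S hFS ih =>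
    have hF : F.card = D := hS F (mem_insert_self _ _)
    have hSc : ∀ G ∈ S, G.card = D := fun G hG => hS G (mem_insert_of_mem hG)
    have ih' := ih hSc
    have hinter : ((Finset.shadow ({F} : Finset (Finset V))) ∩ Finset.shadow S).card ≤ S.card := by
      have hsub : (Finset.shadow ({F} : Finset (Finset V))) ∩ Finset.shadow S ⊆
          S.image (fun G => F ∩ G) := by
        intro s hs
        obtain ⟨hs1, hs2⟩ := Finset.mem_inter.1 hs
        obtain ⟨t, ht, x, hx, rfl⟩ := Finset.mem_shadow_iff.1 hs1
        rw [Finset.mem_singleton] at ht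
        subst ht
        obtain ⟨G, hG, hsubG, hcardG⟩ := Finset.mem_shadow_iff_exists_mem_card_add_one.1 hs2
        have hGD : G.card = D := hSc G hG
        have hcard_erase : (t.erase x).card = D - 1 := by
          rw [Finset.card_erase_of_mem hx, hF]
        have hD1 : 1 ≤ D := by
          rw [← hF]; exact Finset.card_pos.2 ⟨x, hx⟩
        have hFG : t ≠ G := by
          rintro rfl; exact hFS hG
        have hsubFG : t.erase x ⊆ t ∩ G :=
          Finset.subset_inter (Finset.erase_subset _ _) hsubG
        have hFcard : t.card = D := hF
        have hFGcard : (t ∩ G).card ≤ D - 1 := by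
          by_contra hlt
          push_neg at hlt
          have hic := Finset.card_le_card (Finset.inter_subset_left : t ∩ G ⊆ t)
          have h2 : t ∩ G = t := Finset.eq_of_subset_of_card_le
            (Finset.inter_subset_left) (by omega)
          have h3 : t ⊆ G := by rw [← h2]; exact Finset.inter_subset_right
          exact hFG (Finset.eq_of_subset_of_card_le h3 (by omega))
        have heq : t.erase x = t ∩ G := Finset.eq_of_subset_of_card_le hsubFG (by omega)
        rw [heq]
        exact Finset.mem_image_of_mem _ hG
      calc _ ≤ (S.image (fun G => F ∩ G)).card := Finset.card_le_card hsub
        _ ≤ S.card := Finset.card_image_le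
    have hsub2 : Finset.shadow S ∪ (Finset.shadow ({F} : Finset (Finset V)) \ Finset.shadow S)
        ⊆ Finset.shadow (insert F S) := by
      apply Finset.union_subset
      · exact Finset.shadow_monotone (Finset.subset_insert _ _)
      · exact (Finset.sdiff_subset).trans
          (Finset.shadow_monotone (Finset.singleton_subset_iff.2 (mem_insert_self _ _)))
    have hcard2 : (Finset.shadow S).card +
        (Finset.shadow ({F} : Finset (Finset V)) \ Finset.shadow S).card ≤
        (Finset.shadow (insert F S)).card := by
      rw [← Finset.card_union_of_disjoint Finset.disjoint_sdiff]
      exact Finset.card_le_card hsub2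
    have hsplit : (Finset.shadow ({F} : Finset (Finset V)) ∩ Finset.shadow S).card +
        (Finset.shadow ({F} : Finset (Finset V)) \ Finset.shadow S).card = D := by
      rw [Finset.card_inter_add_card_sdiff, card_shadow_singleton', hF]
    rw [Finset.card_insert_of_notMem hFS]
    have h1 : ((Finset.shadow S).card : ℤ) +
        ((Finset.shadow ({F} : Finset (Finset V)) \ Finset.shadow S).card : ℤ) ≤
        ((Finset.shadow (insert F S)).card : ℤ) := by exact_mod_cast hcard2
    have h2 : ((Finset.shadow ({F} : Finset (Finset V)) ∩ Finset.shadow S).card : ℤ) +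
        ((Finset.shadow ({F} : Finset (Finset V)) \ Finset.shadow S).card : ℤ) = (D : ℤ) := by
      exact_mod_cast hsplit
    have h3 : ((Finset.shadow ({F} : Finset (Finset V)) ∩ Finset.shadow S).card : ℤ) ≤
        (S.card : ℤ) := by exact_mod_cast hinter
    push_cast
    nlinarith [ih', h1, h2, h3]

/-- Lemma on face numbers: if `dim Δ = D - 1` (i.e. the maximal cardinality of a
face is `D`) and `a = f_{D-1}(Δ) ≥ 1`, then `f_{D-2}(Δ) ≥ aD - a(a-1)/2` when
`a ≤ D + 1`, and `f_{D-2}(Δ) ≥ D(D+1)/2` when `a > D + 1`. -/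
theorem face_count_lower_bound {V : Type*} [DecidableEq V] [Fintype V] [Nonempty V]
    (Δ : SimplicialCpx V) (D a : ℕ)
    (hD : Δ.faces.sup Finset.card = D)
    (ha : (Δ.faces.filter fun F => F.card = D).card = a) (ha1 : 1 ≤ a) :
    (a ≤ D + 1 →
      (a : ℤ) * D - a * ((a : ℤ) - 1) / 2 ≤
        ((Δ.faces.filter fun F => F.card = D - 1).card : ℤ)) ∧
    (D + 1 < a →
      (D : ℤ) * ((D : ℤ) + 1) / 2 ≤
        ((Δ.faces.filter fun F => F.card = D - 1).card : ℤ)) := by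
  classical
  set 𝒜 := Δ.faces.filter fun F => F.card = D with h𝒜
  set 𝒞 := Δ.faces.filter fun F => F.card = D - 1 with h𝒞
  have hD1 : 1 ≤ D := by
    obtain ⟨v⟩ := ‹Nonempty V›
    have : ({v} : Finset V).card ≤ Δ.faces.sup Finset.card :=
      Finset.le_sup (Δ.singleton_mem v)
    simpa [hD] using this
  have hshadow : ∀ S : Finset (Finset V), S ⊆ 𝒜 → Finset.shadow S ⊆ 𝒞 := by
    intro S hSA s hs
    obtain ⟨t, ht, x, hx, rfl⟩ := Finset.mem_shadow_iff.1 hs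
    have ht' := hSA ht
    rw [h𝒜, Finset.mem_filter] at ht'
    rw [h𝒞, Finset.mem_filter]
    constructor
    · exact Δ.down_closed t ht'.1 _ (Finset.erase_subset _ _)
    · rw [Finset.card_erase_of_mem hx, ht'.2]
  have hAcard : ∀ F ∈ 𝒜, F.card = D := by
    intro F hF; rw [h𝒜, Finset.mem_filter] at hF; exact hF.2
  constructor
  · intro _
    have key := shadow_card_ge D 𝒜 hAcard
    have hle : (Finset.shadow 𝒜).card ≤ 𝒞.card :=
      Finset.card_le_card (hshadow 𝒜 (Finset.Subset.refl _))
    rw [ha] at key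
    have h2 : 2 * ((a : ℤ) * D) - (a : ℤ) * ((a : ℤ) - 1) ≤ 2 * (𝒞.card : ℤ) := by
      have hle' : ((Finset.shadow 𝒜).card : ℤ) ≤ (𝒞.card : ℤ) := by exact_mod_cast hle
      linarith
    obtain ⟨k, hk⟩ : ∃ k : ℤ, (a : ℤ) * ((a : ℤ) - 1) = 2 * k := by
      rcases Int.even_or_odd (a : ℤ) with h | h
      · obtain ⟨r, hr⟩ := h; exact ⟨r * ((a:ℤ) - 1), by rw [hr]; ring⟩
      · obtain ⟨r, hr⟩ := h; exact ⟨(a:ℤ) * r, by rw [hr]; ring⟩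
    rw [hk, Int.mul_ediv_cancel_left _ two_ne_zero]
    rw [hk] at h2
    linarith
  · intro hgt
    obtain ⟨S, hSA, hScard⟩ : ∃ S ⊆ 𝒜, S.card = D + 1 := by
      apply Finset.exists_subset_card_eq
      omega
    have key := shadow_card_ge D S (fun F hF => hAcard F (hSA hF))
    rw [hScard] at key
    have hle : ((Finset.shadow S).card : ℤ) ≤ (𝒞.card : ℤ) := by
      exact_mod_cast Finset.card_le_card (hshadow S hSA)
    have h3 : (D : ℤ) * ((D : ℤ) + 1) ≤ 2 * (𝒞.card : ℤ) := by
      push_cast at key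
      nlinarith
    obtain ⟨k, hk⟩ : ∃ k : ℤ, (D : ℤ) * ((D : ℤ) + 1) = 2 * k := by
      obtain ⟨r, hr⟩ := Int.even_mul_succ_self (D : ℤ)
      exact ⟨r, by rw [hr]; ring⟩
    rw [hk, Int.mul_ediv_cancel_left _ two_ne_zero]
    rw [hk] at h3
    linarith
end

section
/- Let f(t) ∈ ℤ[t] be a monic polynomial all of whose complex roots lie on the unit circle. If f(1) = 4 and deg(f(t)) ≤ f(1) − 1 = 3, then f(t) = Φ_2(t)² = (1+t)² or f(t) = Φ_2(t)Φ_4(t) = 1 + t + t² + t³; in particular, f(t) is of type CI. -/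
open Polynomial

/-- `Ψ_m(t) = 1 + t + ⋯ + t^{m-1} ∈ ℤ[t]`. -/
noncomputable def Psi (m : ℕ) : Polynomial ℤ :=
  ∑ i ∈ Finset.range m, Polynomial.X ^ i

/-- A polynomial is of type CI if it is a (possibly empty) product `Ψ_{m_1} ⋯ Ψ_{m_r}`
with all `m_i` positive. -/
def IsTypeCI (f : Polynomial ℤ) : Prop :=
  ∃ l : List ℕ, (∀ m ∈ l, 0 < m) ∧ f = (l.map Psi).prod

/-- All complex roots of the integer polynomial `h` lie on the unit circle. -/
def RootsOnUnitCircle (h : Polynomial ℤ) : Prop :=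
  ∀ z : ℂ, Polynomial.aeval z h = 0 → ‖z‖ = 1

/-!
For a root `r` on the unit circle, `1/r = conj r`, so the reversed polynomial of
`∏ (X - r)` is `∏ (-r) · ∏ (X - conj r)`. Since `f` has real coefficients this is
`f(0) · f`, i.e. `t^n f(1/t) = f(0) f(t)` with `f(0) = ±1`. For `n ≤ 3` this palindromy up to
sign, together with `f(1) = 4`, leaves only `(1+t)²` and `(1+t)(1+t²)`.
-/

theorem Polynomial.reverse_multiset_prod {R : Type*} [CommSemiring R] [NoZeroDivisors R]
    (s : Multiset R[X]) : s.prod.reverse = (s.map reverse).prod := by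
  induction s using Multiset.induction with
  | empty => simpa using reverse_C (1 : R)
  | cons p s ih => simp [ih]

theorem Polynomial.reverse_X_sub_C {R : Type*} [CommRing R] (r : R) :
    (X - C r).reverse = 1 - C r * X := by
  nontriviality R
  rw [sub_eq_add_neg, ← C_neg, reverse_add_C, ← mul_one X, reverse_X_mul, ← C_1, reverse_C]
  simp [sub_eq_add_neg]

theorem reverse_X_sub_C_of_norm_eq_one {r : ℂ} (hr : ‖r‖ = 1) :
    (X - C r).reverse = C (-r) * (X - C (starRingEnd ℂ r)) := by
  have hconj : r * starRingEnd ℂ r = 1 := by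
    rw [Complex.mul_conj, Complex.normSq_eq_norm_sq, hr]; norm_num
  rw [reverse_X_sub_C, mul_sub, ← C_mul, neg_mul, hconj]
  simp only [C_neg, C_1]
  ring

theorem map_conj_map_intCastRingHom (f : ℤ[X]) :
    (f.map (Int.castRingHom ℂ)).map (starRingEnd ℂ) = f.map (Int.castRingHom ℂ) := by
  rw [Polynomial.map_map]
  congr 1
  exact RingHom.ext_int _ _

theorem RootsOnUnitCircle.reverse_eq_C_coeff_zero_mul {f : ℤ[X]} (hroots : RootsOnUnitCircle f)
    (hf : f.Monic) : f.reverse = C (f.coeff 0) * f := by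
  apply map_injective (Int.castRingHom ℂ) (RingHom.injective_int _)
  set F := f.map (Int.castRingHom ℂ)
  have hF : F = (F.roots.map (X - C ·)).prod :=
    (IsAlgClosed.splits F).eq_prod_roots_of_monic (hf.map _)
  have hnorm : ∀ r ∈ F.roots, ‖r‖ = 1 := fun r hr =>
    hroots r (by simpa [F, aeval_def, eval_map] using isRoot_of_mem_roots hr)
  have hcoeff : (f.coeff 0 : ℂ) = (F.roots.map (- ·)).prod := by
    have : F.coeff 0 = (f.coeff 0 : ℂ) := by simp [F]
    rw [← this, coeff_zero_eq_eval_zero, hF, eval_multiset_prod]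
    simp
  have hrev : f.reverse.map (Int.castRingHom ℂ) = F.reverse := by
    rw [reverse, ← reflect_map, reverse, hf.natDegree_map]
  rw [hrev, Polynomial.map_mul, map_C, eq_intCast, hcoeff]
  calc F.reverse = (F.roots.map fun r => C (-r) * (X - C (starRingEnd ℂ r))).prod := by
        conv_lhs => rw [hF]
        rw [reverse_multiset_prod, Multiset.map_map]
        exact congrArg _ (Multiset.map_congr rfl fun r hr =>
          reverse_X_sub_C_of_norm_eq_one (hnorm r hr))
    _ = C (F.roots.map (- ·)).prod * ((F.roots.map (X - C ·)).prod).map (starRingEnd ℂ) := by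
        rw [Multiset.prod_map_mul, Polynomial.map_multiset_prod, map_multiset_prod,
          Multiset.map_map, Multiset.map_map]
        simp
    _ = C (F.roots.map (- ·)).prod * F := by rw [← hF, map_conj_map_intCastRingHom]

theorem RootsOnUnitCircle.coeff_natDegree_sub {f : ℤ[X]} (hroots : RootsOnUnitCircle f)
    (hf : f.Monic) {k : ℕ} (hk : k ≤ f.natDegree) :
    f.coeff (f.natDegree - k) = f.coeff 0 * f.coeff k := by
  rw [← revAt_le hk, ← coeff_reverse, hroots.reverse_eq_C_coeff_zero_mul hf, coeff_C_mul]

theorem eq_X_add_one_sq_or_of_coeff_natDegree_sub {f : ℤ[X]} (hf : f.Monic)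
    (hsymm : ∀ k ≤ f.natDegree, f.coeff (f.natDegree - k) = f.coeff 0 * f.coeff k)
    (h1 : f.eval 1 = 4) (hdeg : f.natDegree ≤ 3) :
    f = (X + 1) ^ 2 ∨ f = (X + 1) * (X ^ 2 + 1) := by
  have hf_eq := f.as_sum_range_C_mul_X_pow
  rw [eval_eq_sum_range] at h1
  have hlead := hf.coeff_natDegree
  have hunit : f.coeff 0 = 1 ∨ f.coeff 0 = -1 :=
    Int.eq_one_or_neg_one_of_mul_eq_one (by simpa [hlead] using (hsymm 0 (Nat.zero_le _)).symm)
  interval_cases hn : f.natDegree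
  all_goals simp only [Finset.sum_range_succ, Finset.sum_range_zero, one_pow, mul_one,
    zero_add] at h1 hf_eq
  · omega
  · omega
  · have h1' := hsymm 1 (by norm_num)
    rcases hunit with h0 | h0
    · left
      rw [hf_eq, h0, hlead, show f.coeff 1 = 2 by omega]
      simp only [eq_intCast, Int.cast_one, Int.cast_ofNat, pow_zero, pow_one, mul_one, one_mul]
      ring
    · simp only [Nat.reduceSub, h0, neg_one_mul] at h1'
      omega
  · have h1' := hsymm 1 (by norm_num)
    have h2' := hsymm 2 (by norm_num)
    rcases hunit with h0 | h0 <;> simp only [Nat.reduceSub, h0, one_mul, neg_one_mul] at h1' h2'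
    · right
      rw [hf_eq, h0, hlead, show f.coeff 1 = 1 by omega, show f.coeff 2 = 1 by omega]
      simp only [eq_intCast, Int.cast_one, pow_zero, pow_one, mul_one, one_mul]
      ring
    · omega

theorem Polynomial.cyclotomic_four (R : Type*) [CommRing R] : cyclotomic 4 R = X ^ 2 + 1 := by
  rw [show 4 = 2 ^ (1 + 1) from rfl, cyclotomic_prime_pow_eq_geom_sum Nat.prime_two]
  simp [Finset.sum_range_succ, add_comm]

theorem psi_two : Psi 2 = X + 1 := by
  simp [Psi, Finset.sum_range_succ, add_comm]

theorem psi_four : Psi 4 = (X + 1) * (X ^ 2 + 1) := by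
  simp only [Psi, Finset.sum_range_succ, Finset.sum_range_zero]
  ring

/-- A monic integer polynomial with all roots on the unit circle, `f(1) = 4` and
`deg f ≤ 3`, equals `Φ_2² = (1+t)²` or `Φ_2Φ_4 = 1+t+t²+t³`; in particular it is
of type CI. -/
theorem kronecker_value_four (f : Polynomial ℤ) (hmon : f.Monic)
    (hroots : RootsOnUnitCircle f) (h1 : f.eval 1 = 4) (hdeg : f.natDegree ≤ 3) :
    (f = Polynomial.cyclotomic 2 ℤ ^ 2 ∨
      f = Polynomial.cyclotomic 2 ℤ * Polynomial.cyclotomic 4 ℤ) ∧ IsTypeCI f := by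
  rw [cyclotomic_two, cyclotomic_four]
  rcases eq_X_add_one_sq_or_of_coeff_natDegree_sub hmon
    (fun _ hk => hroots.coeff_natDegree_sub hmon hk) h1 hdeg with rfl | rfl
  · exact ⟨Or.inl rfl, [2, 2], by simp, by simp [psi_two, sq]⟩
  · exact ⟨Or.inr rfl, [4], by simp, by simp [psi_four]⟩
end

section
/- Let k be a field and let f(t) ∈ ℤ[t] be a monic polynomial all of whose complex roots lie on the unit circle, with f(1) = 6 and deg(f(t)) ≤ f(1) − 1 = 5. If f(t) = h_R(t) for some standard graded k-algebra R, then f(t) is of type CI. -/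
/-
The `h`-polynomial of a standard graded algebra has `h₀ = 1` and obeys Macaulay's bound
`2 h₂ ≤ h₁ (h₁ + 1)`: `R₂ = R₁²` is spanned by the products of pairs of basis vectors of `R₁`,
and the identity `Hilb(R, t) (1 - t)^d = h(t)` turns `dim R₂ ≤ (dim R₁ + 1).choose 2` into it.

On the other side, the complex roots of a monic integer polynomial `f` with all roots on the
unit circle are stable under `z ↦ z̄ = z⁻¹`, so `f` is palindromic once `f(0) = 1`, and its
power sums satisfy `|p_j| ≤ deg f`. By Newton's identities `p₁, p₂, p₃` are explicit in the
coefficients, and with `f(1) = 6`, `deg f ≤ 5` only `Ψ₂Ψ₃`, `Ψ₆` and `(1 + t²)Ψ₃` survive.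
The last one has `h₁ = 1`, `h₂ = 2` and violates Macaulay's bound.
-/

open Polynomial

/-- A standard graded `k`-algebra: a commutative ℕ-graded `k`-algebra with
finite-dimensional homogeneous components, degree-zero part equal to `k`,
and generated as a `k`-algebra in degree one. -/
structure StdGradedAlgebra (k : Type*) [Field k] where
  carrier : Type*
  [commRing : CommRing carrier]
  [algebra : Algebra k carrier]
  [nontriv : Nontrivial carrier]
  grading : ℕ → Submodule k carrier
  [gradedAlgebra : GradedAlgebra grading]
  finiteDim : ∀ n, Module.Finite k (grading n)
  degZero : grading 0 = (1 : Submodule k carrier)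
  genOne : Algebra.adjoin k (grading 1 : Set carrier) = ⊤

attribute [instance] StdGradedAlgebra.commRing StdGradedAlgebra.algebra
  StdGradedAlgebra.nontriv StdGradedAlgebra.gradedAlgebra

/-- `h` is the `h`-polynomial of `A`: as formal power series,
`Hilb(A,t) = h(t)/(1-t)^d` for some `d : ℕ`, i.e. `h = Hilb(A,t)·(1-t)^d`,
and `h(1) > 0`. -/
def IsHPoly {k : Type*} [Field k] (A : StdGradedAlgebra k) (h : Polynomial ℤ) : Prop :=
  0 < h.eval 1 ∧
    ∃ d : ℕ, (h : PowerSeries ℤ) =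
      PowerSeries.mk (fun n => (Module.finrank k (A.grading n) : ℤ)) *
        (1 - PowerSeries.X) ^ d

namespace Multiset

variable {R : Type*} [CommRing R]

@[simp]
theorem esymm_zero (s : Multiset R) : s.esymm 0 = 1 := by
  simp [esymm]

theorem esymm_one (s : Multiset R) : s.esymm 1 = s.sum := by
  simp [esymm, powersetCard_one]

theorem esymm_eq_zero_of_card_lt (s : Multiset R) {k : ℕ} (h : card s < k) : s.esymm k = 0 := by
  simp [esymm, powersetCard_eq_empty _ h]

theorem esymm_cons_succ (s : Multiset R) (a : R) (k : ℕ) :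
    (a ::ₘ s).esymm (k + 1) = s.esymm (k + 1) + a * s.esymm k := by
  simp only [esymm, powersetCard_cons, map_add, sum_add, map_map, Function.comp_def, prod_cons,
    sum_map_mul_left]

theorem esymm_card (s : Multiset R) : s.esymm (card s) = s.prod := by
  induction s using Multiset.induction with
  | empty => simp
  | cons a s ih =>
    rw [card_cons, esymm_cons_succ, ih, esymm_eq_zero_of_card_lt s (Nat.lt_succ_self _), prod_cons,
      zero_add]

theorem sum_map_pow_two (s : Multiset R) :
    (s.map (· ^ 2)).sum = s.esymm 1 ^ 2 - 2 * s.esymm 2 := by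
  induction s using Multiset.induction with
  | empty => simp [esymm, powersetCard_zero_right]
  | cons a s ih =>
    rw [map_cons, sum_cons, ih, esymm_cons_succ, esymm_cons_succ, esymm_zero]
    ring

theorem sum_map_pow_three (s : Multiset R) :
    (s.map (· ^ 3)).sum = s.esymm 1 ^ 3 - 3 * s.esymm 1 * s.esymm 2 + 3 * s.esymm 3 := by
  induction s using Multiset.induction with
  | empty => simp [esymm, powersetCard_zero_right]
  | cons a s ih =>
    rw [map_cons, sum_cons, ih, esymm_cons_succ, esymm_cons_succ, esymm_cons_succ, esymm_zero]
    ring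

theorem esymm_map_inv_mul_prod {K : Type*} [Field K] (s : Multiset K) (hs : ∀ z ∈ s, z ≠ 0)
    {i j : ℕ} (hij : i + j = card s) : (s.map (·⁻¹)).esymm i * s.prod = s.esymm j := by
  induction s using Multiset.induction generalizing i j with
  | empty =>
    obtain ⟨rfl, rfl⟩ : i = 0 ∧ j = 0 := by simpa using hij
    simp
  | cons a s ih =>
    have ha : a ≠ 0 := hs a (mem_cons_self a s)
    have hs' : ∀ z ∈ s, z ≠ 0 := fun z hz => hs z (mem_cons_of_mem hz)
    rw [card_cons] at hij
    rw [map_cons, prod_cons]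
    match i, j with
    | 0, j =>
      rw [zero_add] at hij
      rw [hij, ← card_cons a s, esymm_card, prod_cons, esymm_zero, one_mul]
    | i + 1, 0 =>
      have hi : i = card s := by omega
      subst hi
      have h := ih hs' (add_zero (card s))
      rw [esymm_zero] at h
      rw [esymm_cons_succ, esymm_eq_zero_of_card_lt _ (by simp), esymm_zero, ← h, zero_add,
        mul_mul_mul_comm, inv_mul_cancel₀ ha, one_mul]
    | i + 1, j + 1 =>
      rw [esymm_cons_succ, esymm_cons_succ, ← ih hs' (i := i + 1) (j := j) (by omega),
        ← ih hs' (i := i) (j := j + 1) (by omega)]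
      field_simp
      ring

end Multiset

noncomputable def complexRoots (f : ℤ[X]) : Multiset ℂ :=
  (f.map (algebraMap ℤ ℂ)).roots

theorem card_complexRoots (f : ℤ[X]) : Multiset.card (complexRoots f) = f.natDegree := by
  rw [complexRoots, ← natDegree_map_eq_of_injective (algebraMap ℤ ℂ).injective_int f]
  exact splits_iff_card_roots.mp (IsAlgClosed.splits _)

theorem coeff_eq_esymm_complexRoots {f : ℤ[X]} (hmon : f.Monic) {i j : ℕ}
    (hij : i + j = f.natDegree) : (f.coeff j : ℂ) = (-1) ^ i * (complexRoots f).esymm i := by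
  have h := coeff_eq_esymm_roots_of_splits (IsAlgClosed.splits (f.map (algebraMap ℤ ℂ)))
    (k := j) (by rw [hmon.natDegree_map]; omega)
  rw [(hmon.map _).leadingCoeff, one_mul, hmon.natDegree_map, coeff_map,
    show f.natDegree - j = i by omega] at h
  simpa [complexRoots] using h

namespace RootsOnUnitCircle

variable {f : ℤ[X]}

theorem norm_eq_one (hroots : RootsOnUnitCircle f) {z : ℂ} (hz : z ∈ complexRoots f) :
    ‖z‖ = 1 :=
  hroots z (by rw [aeval_def, eval₂_eq_eval_map]; exact isRoot_of_mem_roots hz)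

theorem map_inv_complexRoots (hroots : RootsOnUnitCircle f) :
    (complexRoots f).map (·⁻¹) = complexRoots f := by
  have hconj : (complexRoots f).map (starRingEnd ℂ) = complexRoots f := by
    rw [complexRoots, ← (IsAlgClosed.splits _).roots_map, Polynomial.map_map,
      show (starRingEnd ℂ).comp (algebraMap ℤ ℂ) = algebraMap ℤ ℂ from Subsingleton.elim _ _]
  conv_rhs => rw [← hconj]
  refine Multiset.map_congr rfl fun z hz => ?_
  rw [Complex.inv_def, Complex.normSq_eq_norm_sq, hroots.norm_eq_one hz]
  simp

theorem coeff_eq_coeff_of_add_eq (hroots : RootsOnUnitCircle f) (hmon : f.Monic)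
    (h0 : f.coeff 0 = 1) {i j : ℕ} (hij : i + j = f.natDegree) : f.coeff i = f.coeff j := by
  have hne : ∀ z ∈ complexRoots f, z ≠ 0 := fun z hz h => by
    simpa [h] using hroots.norm_eq_one hz
  have hprod : (complexRoots f).prod = (-1) ^ f.natDegree := by
    have h := coeff_eq_esymm_complexRoots hmon (add_zero f.natDegree)
    have hsq : (-1 : ℂ) ^ (f.natDegree + f.natDegree) = 1 := Even.neg_one_pow ⟨_, rfl⟩
    rw [h0, ← card_complexRoots, Multiset.esymm_card, card_complexRoots, Int.cast_one] at h
    linear_combination -(-1 : ℂ) ^ f.natDegree * h - (complexRoots f).prod * hsq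
  have hsymm := (complexRoots f).esymm_map_inv_mul_prod hne (i := i) (j := j)
    (by rw [card_complexRoots, hij])
  rw [hroots.map_inv_complexRoots, hprod, ← hij] at hsymm
  apply Int.cast_injective (α := ℂ)
  rw [coeff_eq_esymm_complexRoots hmon (i := j) (by omega),
    coeff_eq_esymm_complexRoots hmon hij, ← hsymm]
  have hsq : (-1 : ℂ) ^ (j + j) = 1 := Even.neg_one_pow ⟨j, rfl⟩
  linear_combination (-1 : ℂ) ^ i * (complexRoots f).esymm i * hsq

theorem esymm_complexRoots (hroots : RootsOnUnitCircle f) (hmon : f.Monic)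
    (h0 : f.coeff 0 = 1) (j : ℕ) : (complexRoots f).esymm j = (-1) ^ j * f.coeff j := by
  rcases le_or_gt j f.natDegree with hj | hj
  · obtain ⟨i, hij⟩ := Nat.exists_eq_add_of_le' hj
    rw [← hroots.coeff_eq_coeff_of_add_eq hmon h0 hij.symm,
      coeff_eq_esymm_complexRoots hmon (i := j) (j := i) (by omega), ← mul_assoc, ← pow_add,
      Even.neg_one_pow ⟨j, rfl⟩, one_mul]
  · rw [Multiset.esymm_eq_zero_of_card_lt _ (by rwa [card_complexRoots]),
      coeff_eq_zero_of_natDegree_lt hj]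
    simp

theorem abs_le_natDegree_of_cast_eq_sum_pow (hroots : RootsOnUnitCircle f) {p : ℤ} {j : ℕ}
    (hp : (p : ℂ) = ((complexRoots f).map (· ^ j)).sum) : |p| ≤ f.natDegree := by
  have h : ‖(p : ℂ)‖ ≤ f.natDegree := by
    rw [hp, ← card_complexRoots]
    refine (norm_multiset_sum_le _).trans ?_
    rw [Multiset.map_map]
    refine (Multiset.sum_le_card_nsmul _ 1 ?_).trans (by simp)
    simp only [Multiset.mem_map, Function.comp_apply, norm_pow]
    rintro _ ⟨z, hz, rfl⟩
    rw [hroots.norm_eq_one hz, one_pow]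
  rw [Complex.norm_intCast] at h
  exact_mod_cast h

theorem abs_powerSums_le (hroots : RootsOnUnitCircle f) (hmon : f.Monic)
    (h0 : f.coeff 0 = 1) :
    |f.coeff 1| ≤ f.natDegree ∧ |f.coeff 1 ^ 2 - 2 * f.coeff 2| ≤ (f.natDegree : ℤ) ∧
      |f.coeff 1 ^ 3 - 3 * f.coeff 1 * f.coeff 2 + 3 * f.coeff 3| ≤ (f.natDegree : ℤ) := by
  have he := hroots.esymm_complexRoots hmon h0
  refine ⟨?_, hroots.abs_le_natDegree_of_cast_eq_sum_pow (j := 2) ?_, ?_⟩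
  · rw [← abs_neg]
    refine hroots.abs_le_natDegree_of_cast_eq_sum_pow (j := 1) ?_
    simp [← Multiset.esymm_one, he]
  · rw [Multiset.sum_map_pow_two, he, he]
    push_cast
    ring
  · rw [← abs_neg]
    refine hroots.abs_le_natDegree_of_cast_eq_sum_pow (j := 3) ?_
    rw [Multiset.sum_map_pow_three, he, he, he]
    push_cast
    ring

theorem eq_of_eval_one_eq_six (hroots : RootsOnUnitCircle f) (hmon : f.Monic)
    (h0 : f.coeff 0 = 1) (h1 : f.eval 1 = 6) (hdeg : f.natDegree ≤ 5) :
    f = Psi 2 * Psi 3 ∨ f = Psi 6 ∨ f = X ^ 4 + X ^ 3 + 2 * X ^ 2 + X + 1 := by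
  have hpal := fun i j => hroots.coeff_eq_coeff_of_add_eq hmon h0 (i := i) (j := j)
  obtain ⟨hb1, hb2, hb3⟩ := hroots.abs_powerSums_le hmon h0
  have hlead : f.coeff f.natDegree = 1 := hmon.coeff_natDegree
  have hsum : ∑ i ∈ Finset.range (f.natDegree + 1), f.coeff i = 6 := by
    rw [← h1, eval_eq_sum_range]
    simp
  have hf := f.as_sum_range_C_mul_X_pow
  generalize f.natDegree = n at hpal hb1 hb2 hb3 hlead hsum hf hdeg
  rw [abs_le] at hb1 hb2 hb3
  obtain ⟨hb1l, hb1u⟩ := hb1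
  interval_cases n <;>
    simp only [Finset.sum_range_succ, Finset.sum_range_zero, Nat.cast_ofNat] at hsum hf hb1l hb1u
  · omega
  · have := hpal 1 0 rfl
    omega
  · have := hpal 2 0 rfl
    omega
  · obtain ⟨hc1, hc2⟩ : f.coeff 1 = 2 ∧ f.coeff 2 = 2 := by
      have := hpal 2 1 rfl
      omega
    left
    rw [hf, h0, hc1, hc2, hlead]
    simp [Psi, Finset.sum_range_succ]
    ring
  · obtain ⟨hc1, hc2, hc3⟩ : f.coeff 1 = 1 ∧ f.coeff 2 = 2 ∧ f.coeff 3 = 1 := by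
      have := hpal 3 1 rfl
      interval_cases f.coeff 1 <;> omega
    right; right
    rw [hf, h0, hc1, hc2, hc3, hlead]
    simp
    ring
  · obtain ⟨hc1, hc2, hc3, hc4⟩ :
        f.coeff 1 = 1 ∧ f.coeff 2 = 1 ∧ f.coeff 3 = 1 ∧ f.coeff 4 = 1 := by
      have := hpal 4 1 rfl
      have := hpal 3 2 rfl
      interval_cases f.coeff 1 <;> omega
    right; left
    rw [hf, h0, hc1, hc2, hc3, hc4, hlead]
    simp [Psi, Finset.sum_range_succ]

end RootsOnUnitCircle

theorem PowerSeries.coeff_one_sub_X_pow {R : Type*} [CommRing R] (d n : ℕ) :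
    coeff n ((1 - X : PowerSeries R) ^ d) = (-1) ^ n * d.choose n := by
  induction d generalizing n with
  | zero => cases n <;> simp
  | succ d ih =>
    rw [pow_succ, mul_sub, mul_one, map_sub]
    cases n with
    | zero => simp [ih]
    | succ n =>
      rw [coeff_succ_mul_X, ih, ih, Nat.choose_succ_succ', Nat.cast_add, pow_succ]
      ring

section GradedAlgebra

variable {k R : Type*} [CommSemiring k] [Semiring R] [Algebra k R] (G : ℕ → Submodule k R)
  [GradedAlgebra G]

theorem pow_grading_one_le (n : ℕ) : G 1 ^ n ≤ G n := by
  induction n with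
  | zero => exact Submodule.one_le.mpr (SetLike.one_mem_graded G)
  | succ n ih =>
    rw [pow_succ]
    exact Submodule.mul_le.mpr fun a ha b hb => SetLike.mul_mem_graded (ih ha) hb

theorem grading_eq_pow_grading_one (hgen : Algebra.adjoin k (G 1 : Set R) = ⊤) (n : ℕ) :
    G n = G 1 ^ n := by
  refine le_antisymm (fun x hx => ?_) (pow_grading_one_le G n)
  have hclosure : ∀ y ∈ Submonoid.closure (G 1 : Set R), ∃ m, y ∈ G 1 ^ m := by
    intro y hy
    induction hy using Submonoid.closure_induction with
    | mem y hy => exact ⟨1, by rwa [pow_one]⟩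
    | one => exact ⟨0, by rw [pow_zero]; exact Submodule.one_le.mp le_rfl⟩
    | mul y z _ _ hy hz =>
      obtain ⟨m, hm⟩ := hy
      obtain ⟨l, hl⟩ := hz
      exact ⟨m + l, pow_add (G 1) m l ▸ Submodule.mul_mem_mul hm hl⟩
  have hspan : Submodule.span k (Submonoid.closure (G 1 : Set R) : Set R) ≤
      (G 1 ^ n).comap (GradedAlgebra.proj G n) := by
    rw [Submodule.span_le]
    intro y hy
    obtain ⟨m, hm⟩ := hclosure y hy
    by_cases hmn : m = n
    · subst hmn
      simpa [DirectSum.decompose_of_mem_same G (pow_grading_one_le G m hm)] using hm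
    · simp [DirectSum.decompose_of_mem_ne G (pow_grading_one_le G m hm) hmn]
  have hx' : x ∈ Submodule.span k (Submonoid.closure (G 1 : Set R) : Set R) := by
    rw [← Algebra.adjoin_eq_span, hgen]
    trivial
  simpa [DirectSum.decompose_of_mem_same G hx] using hspan hx'

end GradedAlgebra

theorem Submodule.finrank_pow_two_le {k R : Type*} [Field k] [CommRing R] [Algebra k R]
    (M : Submodule k R) [Module.Finite k M] :
    Module.finrank k ↥(M ^ 2) ≤ (Module.finrank k M + 1).choose 2 := by
  let b := Module.finBasis k M
  let v : Fin (Module.finrank k M) → R := fun i => b i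
  let g : Sym2 (Fin (Module.finrank k M)) → R :=
    Sym2.lift ⟨fun i j => v i * v j, fun _ _ => mul_comm _ _⟩
  have hM : M = span k (Set.range v) := by
    rw [show Set.range v = M.subtype '' Set.range b from Set.range_comp _ _, ← Submodule.map_span,
      b.span_eq, Submodule.map_subtype_top]
  have hle : M ^ 2 ≤ span k (Set.range g) := by
    rw [pow_two]
    conv_lhs => rw [hM]
    rw [span_mul_span, span_le]
    rintro _ ⟨_, ⟨i, rfl⟩, _, ⟨j, rfl⟩, rfl⟩
    exact subset_span ⟨s(i, j), rfl⟩
  have := FiniteDimensional.span_of_finite k (Set.finite_range g)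
  calc Module.finrank k ↥(M ^ 2) ≤ Module.finrank k (span k (Set.range g)) :=
        Submodule.finrank_mono hle
    _ ≤ Fintype.card (Sym2 (Fin (Module.finrank k M))) := finrank_range_le_card g
    _ = (Module.finrank k M + 1).choose 2 := by rw [Sym2.card, Fintype.card_fin]

theorem Nat.two_mul_cast_choose_two {R : Type*} [CommRing R] (m : ℕ) :
    2 * (m.choose 2 : R) = m * (m - 1) := by
  induction m with
  | zero => simp
  | succ m ih =>
    rw [Nat.choose_succ_succ', Nat.choose_one_right, Nat.cast_add, mul_add, ih]
    push_cast
    ring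

namespace StdGradedAlgebra

variable {k : Type*} [Field k] (A : StdGradedAlgebra k)

theorem finrank_grading_zero : Module.finrank k (A.grading 0) = 1 := by
  rw [A.degZero, Submodule.one_eq_span]
  exact finrank_span_singleton one_ne_zero

theorem finrank_grading_two_le :
    Module.finrank k (A.grading 2) ≤ (Module.finrank k (A.grading 1) + 1).choose 2 := by
  have := A.finiteDim 1
  rw [grading_eq_pow_grading_one A.grading A.genOne 2]
  exact (A.grading 1).finrank_pow_two_le

end StdGradedAlgebra

namespace IsHPoly

variable {k : Type*} [Field k] {A : StdGradedAlgebra k} {f : ℤ[X]}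

theorem exists_coeff_eq (hh : IsHPoly A f) : ∃ d : ℕ, ∀ n, f.coeff n =
    ∑ p ∈ Finset.HasAntidiagonal.antidiagonal n,
      (Module.finrank k (A.grading p.1) : ℤ) * ((-1) ^ p.2 * d.choose p.2) := by
  obtain ⟨-, d, hd⟩ := hh
  refine ⟨d, fun n => ?_⟩
  rw [← Polynomial.coeff_coe, hd, PowerSeries.coeff_mul]
  simp [PowerSeries.coeff_one_sub_X_pow]

theorem coeff_zero (hh : IsHPoly A f) : f.coeff 0 = 1 := by
  obtain ⟨d, hd⟩ := hh.exists_coeff_eq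
  simp [hd, A.finrank_grading_zero]

theorem two_mul_coeff_two_le (hh : IsHPoly A f) :
    2 * f.coeff 2 ≤ f.coeff 1 * (f.coeff 1 + 1) := by
  obtain ⟨d, hd⟩ := hh.exists_coeff_eq
  have hH2 : 2 * (Module.finrank k (A.grading 2) : ℤ) ≤
      (Module.finrank k (A.grading 1) + 1) * Module.finrank k (A.grading 1) := by
    have h := Nat.two_mul_cast_choose_two (R := ℤ) (Module.finrank k (A.grading 1) + 1)
    push_cast at h
    have := A.finrank_grading_two_le
    zify at this
    linarith
  have hd2 := Nat.two_mul_cast_choose_two (R := ℤ) d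
  rw [hd 1, hd 2]
  simp [Finset.Nat.antidiagonal_succ, A.finrank_grading_zero]
  linarith

end IsHPoly

/-- A monic integer polynomial with all roots on the unit circle, `f(1) = 6` and
`deg f ≤ 5`, which is the `h`-polynomial of some standard graded `k`-algebra, is
of type CI. -/
theorem kronecker_value_six (k : Type*) [Field k] (f : Polynomial ℤ) (hmon : f.Monic)
    (hroots : RootsOnUnitCircle f) (h1 : f.eval 1 = 6) (hdeg : f.natDegree ≤ 5)
    (A : StdGradedAlgebra k) (hh : IsHPoly A f) :
    IsTypeCI f := by
  rcases hroots.eq_of_eval_one_eq_six hmon hh.coeff_zero h1 hdeg with rfl | rfl | rfl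
  · exact ⟨[2, 3], by simp, by simp⟩
  · exact ⟨[6], by simp, by simp⟩
  · have h := hh.two_mul_coeff_two_le
    simp [coeff_X, coeff_one] at h
end

section
/- Let q ≥ 5 be an odd integer. Then in ℤ[t] the following identity holds: Ψ_2(t) Ψ_q(t) Φ_6(t^{(q−1)/2}) = Ψ_{2q}(t) + t(1−t)² Ψ_{(q−3)/2}(t) Ψ_{(q−1)/2}(t) Ψ_q(t). -/
open Polynomial

/-!
Since `Ψ_{2q} = Ψ_q (1 + t^q)`, the factor `Ψ_q` splits off and, for `q = 2n + 1`, the identity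
reduces to `(1 + t)(t^{2n} - t^n + 1) - (1 + t^{2n+1}) = t (t^{n-1} - 1)(t^n - 1)`,
whose right-hand side is `t (1 - t)² Ψ_{n-1} Ψ_n`.
-/

theorem one_sub_X_mul_Psi (m : ℕ) : (1 - X) * Psi m = 1 - X ^ m :=
  mul_neg_geom_sum X m

theorem Psi_zero : Psi 0 = 0 := Finset.sum_range_zero _

theorem Psi_two : Psi 2 = 1 + X := by
  simp [Psi, Finset.sum_range_succ]

theorem Psi_two_mul (m : ℕ) : Psi (2 * m) = Psi m * (1 + X ^ m) := by
  simp only [Psi, two_mul, Finset.sum_range_add, pow_add, ← Finset.mul_sum]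
  ring

theorem one_add_X_mul_cyclotomic_six_comp_X_pow_succ (n : ℕ) :
    (1 + X) * (cyclotomic 6 ℤ).comp (X ^ (n + 1)) =
      1 + X ^ (2 * n + 3) + X * (1 - X) ^ 2 * Psi n * Psi (n + 1) := by
  simp only [cyclotomic_six, add_comp, sub_comp, pow_comp, X_comp, one_comp]
  linear_combination (-X * (1 - X ^ (n + 1))) * one_sub_X_mul_Psi n -
    X * (1 - X) * Psi n * one_sub_X_mul_Psi (n + 1)

theorem psi_identity_two_general (q : ℕ) (hq : Odd q) :
    Psi 2 * Psi q * (Polynomial.cyclotomic 6 ℤ).comp (Polynomial.X ^ ((q - 1) / 2)) =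
      Psi (2 * q) + Polynomial.X * (1 - Polynomial.X) ^ 2 *
        Psi ((q - 3) / 2) * Psi ((q - 1) / 2) * Psi q := by
  obtain ⟨n, rfl⟩ := hq
  rw [Psi_two_mul, Psi_two]
  rcases n with _ | m
  · simp [Psi_zero, mul_comm]
  · have hhalf : (2 * (m + 1) + 1 - 1) / 2 = m + 1 := by omega
    have hhalf' : (2 * (m + 1) + 1 - 3) / 2 = m := by omega
    rw [hhalf, hhalf', mul_right_comm, one_add_X_mul_cyclotomic_six_comp_X_pow_succ]
    ring

/-- For odd `q ≥ 5`:
`Ψ_2 Ψ_q Φ_6(t^{(q-1)/2}) = Ψ_{2q} + t(1-t)² Ψ_{(q-3)/2} Ψ_{(q-1)/2} Ψ_q`. -/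
theorem psi_identity_two (q : ℕ) (hq : Odd q) (h5 : 5 ≤ q) :
    Psi 2 * Psi q * (Polynomial.cyclotomic 6 ℤ).comp (Polynomial.X ^ ((q - 1) / 2)) =
      Psi (2 * q) + Polynomial.X * (1 - Polynomial.X) ^ 2 *
        Psi ((q - 3) / 2) * Psi ((q - 1) / 2) * Psi q :=
  psi_identity_two_general q hq
end

section
/- Let q ≥ 3 be an odd integer. Then in ℤ[t] the following identity holds: Ψ_3(t) Ψ_q(t) Φ_6(t^{q−1}) = Ψ_{3q}(t) + t(1−t)² Ψ_2(t) Ψ_{q−2}(t) Ψ_{q−1}(t) Ψ_q(t). -/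
open Polynomial

/-! Multiplying by `(t - 1)²` turns every `Ψ_m` into `t^m - 1`; the identity then becomes one
between polynomials in `t` and `t^{q-2}`, and `(t - 1)²` cancels in the domain `ℤ[t]`. -/

theorem Psi_mul_X_sub_one (m : ℕ) : Psi m * (X - 1) = X ^ m - 1 :=
  geom_sum_mul X m

theorem cyclotomic_six_comp_X_pow (R : Type*) [Ring R] (k : ℕ) :
    (cyclotomic 6 R).comp (X ^ k) = X ^ (2 * k) - X ^ k + 1 := by
  simp [cyclotomic_six, pow_mul']

theorem psi_identity_three_general (q : ℕ) (h3 : 3 ≤ q) :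
    Psi 3 * Psi q * (Polynomial.cyclotomic 6 ℤ).comp (Polynomial.X ^ (q - 1)) =
      Psi (3 * q) + Polynomial.X * (1 - Polynomial.X) ^ 2 *
        Psi 2 * Psi (q - 2) * Psi (q - 1) * Psi q := by
  obtain ⟨n, rfl⟩ : ∃ n, q = n + 2 := ⟨q - 2, by omega⟩
  simp only [Nat.add_sub_cancel, show n + 2 - 1 = n + 1 by omega]
  refine mul_right_cancel₀ (pow_ne_zero 2 (X_sub_C_ne_zero (1 : ℤ))) ?_
  simp only [C_1]
  calc Psi 3 * Psi (n + 2) * (cyclotomic 6 ℤ).comp (X ^ (n + 1)) * (X - 1) ^ 2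
      = (Psi 3 * (X - 1)) * (Psi (n + 2) * (X - 1)) *
          (cyclotomic 6 ℤ).comp (X ^ (n + 1)) := by ring
    _ = (Psi (3 * (n + 2)) * (X - 1)) * (X - 1) + X * (Psi 2 * (X - 1)) *
          (Psi n * (X - 1)) * (Psi (n + 1) * (X - 1)) * (Psi (n + 2) * (X - 1)) := by
        simp only [Psi_mul_X_sub_one, cyclotomic_six_comp_X_pow]
        ring
    _ = _ := by ring

/-- For odd `q ≥ 3`:
`Ψ_3 Ψ_q Φ_6(t^{q-1}) = Ψ_{3q} + t(1-t)² Ψ_2 Ψ_{q-2} Ψ_{q-1} Ψ_q`. -/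
theorem psi_identity_three (q : ℕ) (hq : Odd q) (h3 : 3 ≤ q) :
    Psi 3 * Psi q * (Polynomial.cyclotomic 6 ℤ).comp (Polynomial.X ^ (q - 1)) =
      Psi (3 * q) + Polynomial.X * (1 - Polynomial.X) ^ 2 *
        Psi 2 * Psi (q - 2) * Psi (q - 1) * Psi q :=
  psi_identity_three_general q h3
end
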